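/- arXiv:1301.0676 — 4 statements merged into one kernel-verified Lean document; each statement's English description precedes it below -/
import Mathlib

section
/- Uniform strong law of large numbers for the FKM loss class: Let M be an arbitrary positive number and let G be the class of all functions on ℝ^p of the form g_{(F,A)}(x) = min_{f∈F} ψ(‖Aᵀx − f‖), where (F, A) ranges over Θ_k*(M). Suppose that ∫ ψ(‖x‖) P(dx) < ∞. Then almost surely, sup_{g∈G} | ∫ g(x) P_n(dx) − ∫ g(x) P(dx) | → 0 as n → ∞. -/
open MeasureTheory Metric Filter ProbabilityTheory
open scoped ENNReal Classical

noncomputable section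

/-- The set of real `p × q` column-wise orthonormal matrices (`AᵀA = I_q`). -/
def Stiefel (p q : ℕ) : Set (Matrix (Fin p) (Fin q) ℝ) :=
  {A | A.transpose * A = 1}

/-- `x ↦ Aᵀ x`, viewed as a map from Euclidean `ℝ^p` to Euclidean `ℝ^q`. -/
def mulVecT {p q : ℕ} (A : Matrix (Fin p) (Fin q) ℝ)
    (x : EuclideanSpace ℝ (Fin p)) : EuclideanSpace ℝ (Fin q) :=
  (WithLp.equiv 2 (Fin q → ℝ)).symm (A.transpose.mulVec (WithLp.equiv 2 (Fin p → ℝ) x))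

/-- Pointwise FKM loss `min_{f ∈ F} ψ(‖Aᵀx − f‖)` (junk value `0` if `F = ∅`). -/
def lossFn {p q : ℕ} (ψ : ℝ → ℝ) (F : Finset (EuclideanSpace ℝ (Fin q)))
    (A : Matrix (Fin p) (Fin q) ℝ) (x : EuclideanSpace ℝ (Fin p)) : ℝ :=
  if h : F.Nonempty then F.inf' h (fun f => ψ ‖mulVecT A x - f‖) else 0

/-- FKM objective `Ψ(F, A, Q) = ∫ min_{f∈F} ψ(‖Aᵀx − f‖) Q(dx)`. -/
def Psi {p q : ℕ} (ψ : ℝ → ℝ) (F : Finset (EuclideanSpace ℝ (Fin q)))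
    (A : Matrix (Fin p) (Fin q) ℝ) (Q : Measure (EuclideanSpace ℝ (Fin p))) : ℝ :=
  ∫ x, lossFn ψ F A x ∂Q

/-- Parameter: a finite set of centers in `ℝ^q` together with a `p×q` matrix. -/
abbrev Param (p q : ℕ) := Finset (EuclideanSpace ℝ (Fin q)) × Matrix (Fin p) (Fin q) ℝ

/-- `Ξ_k = R_k × O(p×q)`. -/
def Xi (p q k : ℕ) : Set (Param p q) :=
  {θ | θ.1.Nonempty ∧ θ.1.card ≤ k ∧ θ.2 ∈ Stiefel p q}

/-- `Θ_k*(M) = R_k*(M) × O(p×q)`, centers restricted to the closed ball `B_q(M)`. -/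
def XiStar (p q k : ℕ) (M : ℝ) : Set (Param p q) :=
  {θ | θ ∈ Xi p q k ∧ (θ.1 : Set (EuclideanSpace ℝ (Fin q))) ⊆ closedBall 0 M}

/-- `m_j(Q) = inf {Ψ(θ, Q) : θ ∈ Ξ_j}`. -/
def mval (ψ : ℝ → ℝ) (p q j : ℕ) (Q : Measure (EuclideanSpace ℝ (Fin p))) : ℝ :=
  sInf ((fun θ : Param p q => Psi ψ θ.1 θ.2 Q) '' Xi p q j)

/-- `m_k*(Q | M) = inf {Ψ(θ, Q) : θ ∈ Θ_k*(M)}`. -/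
def mvalStar (ψ : ℝ → ℝ) (p q k : ℕ) (M : ℝ)
    (Q : Measure (EuclideanSpace ℝ (Fin p))) : ℝ :=
  sInf ((fun θ : Param p q => Psi ψ θ.1 θ.2 Q) '' XiStar p q k M)

/-- `Θ′`, the set of population global optimizers over `Ξ_k`. -/
def OptSet (ψ : ℝ → ℝ) (p q k : ℕ) (P : Measure (EuclideanSpace ℝ (Fin p))) :
    Set (Param p q) :=
  {θ | θ ∈ Xi p q k ∧ Psi ψ θ.1 θ.2 P = mval ψ p q k P}

/-- `Θ*`, the set of optimizers over the restricted space `Θ_k*(M)`. -/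
def OptSetStar (ψ : ℝ → ℝ) (p q k : ℕ) (M : ℝ)
    (P : Measure (EuclideanSpace ℝ (Fin p))) : Set (Param p q) :=
  {θ | θ ∈ XiStar p q k M ∧ Psi ψ θ.1 θ.2 P = mvalStar ψ p q k M P}

/-- Frobenius distance between matrices. -/
def frobDist {m n : ℕ} (A B : Matrix (Fin m) (Fin n) ℝ) : ℝ :=
  Real.sqrt (∑ i, ∑ j, (A i j - B i j) ^ 2)

/-- Product metric `d = √(d_F² + d_H²)` on parameters. -/
def paramDist {p q : ℕ} (θ θ' : Param p q) : ℝ :=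
  Real.sqrt (frobDist θ.2 θ'.2 ^ 2 +
    hausdorffDist (θ.1 : Set (EuclideanSpace ℝ (Fin q)))
      (θ'.1 : Set (EuclideanSpace ℝ (Fin q))) ^ 2)

/-- Distance from a parameter to a set of parameters. -/
def distToSet {p q : ℕ} (θ : Param p q) (S : Set (Param p q)) : ℝ :=
  sInf (paramDist θ '' S)

/-- Empirical measure `P_n` of `X_1(ω), …, X_n(ω)`. -/
def empMeasure {Ω E : Type*} [MeasurableSpace Ω] [MeasurableSpace E]
    (X : ℕ → Ω → E) (ω : Ω) (n : ℕ) : Measure E :=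
  (n : ℝ≥0∞)⁻¹ • ∑ i ∈ Finset.range n, Measure.dirac (X i ω)


lemma mulVecT_apply {p q : ℕ} (A : Matrix (Fin p) (Fin q) ℝ) (x : EuclideanSpace ℝ (Fin p))
    (j : Fin q) : mulVecT A x j = ∑ i, A i j * x i := by
  simp [mulVecT, Matrix.mulVec, dotProduct, Matrix.transpose_apply]

lemma norm_mulVecT_le {p q : ℕ} (A : Matrix (Fin p) (Fin q) ℝ) {c : ℝ} (hc : 0 ≤ c)
    (h : ∀ j, ∑ i, (A i j)^2 ≤ c^2) (x : EuclideanSpace ℝ (Fin p)) :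
    ‖mulVecT A x‖ ≤ Real.sqrt q * c * ‖x‖ := by
  have hx2 : ∑ i, (x i)^2 = ‖x‖^2 := by
    rw [EuclideanSpace.norm_eq, Real.sq_sqrt (by positivity)]
    simp [sq_abs]
  have key : ‖mulVecT A x‖^2 ≤ (q : ℝ) * c^2 * ‖x‖^2 := by
    rw [EuclideanSpace.norm_eq, Real.sq_sqrt (by positivity)]
    calc ∑ j, ‖(mulVecT A x) j‖^2 = ∑ j, (∑ i, A i j * x i)^2 := by
          simp [mulVecT_apply, sq_abs]
      _ ≤ ∑ j : Fin q, (∑ i, (A i j)^2) * (∑ i, (x i)^2) :=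
          Finset.sum_le_sum (fun j _ => Finset.sum_mul_sq_le_sq_mul_sq _ _ _)
      _ ≤ ∑ j : Fin q, c^2 * ‖x‖^2 := by
          refine Finset.sum_le_sum (fun j _ => ?_)
          rw [← hx2]
          have := h j
          have hxnn : (0:ℝ) ≤ ∑ i, (x i)^2 := by positivity
          nlinarith [h j]
      _ = (q : ℝ) * c^2 * ‖x‖^2 := by simp [Finset.sum_const]; ring
  have hb : (0:ℝ) ≤ Real.sqrt q * c * ‖x‖ := by positivity
  calc ‖mulVecT A x‖ = Real.sqrt (‖mulVecT A x‖^2) := (Real.sqrt_sq (norm_nonneg _)).symm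
    _ ≤ Real.sqrt ((q:ℝ) * c^2 * ‖x‖^2) := Real.sqrt_le_sqrt key
    _ = Real.sqrt q * c * ‖x‖ := by
        rw [Real.sqrt_mul (by positivity), Real.sqrt_mul (by positivity),
          Real.sqrt_sq hc, Real.sqrt_sq (norm_nonneg _)]

lemma stiefel_col {p q : ℕ} {A : Matrix (Fin p) (Fin q) ℝ} (hA : A ∈ Stiefel p q) (j : Fin q) :
    ∑ i, (A i j)^2 = 1 := by
  have := congr_fun (congr_fun hA j) j
  simpa [Matrix.mul_apply, Matrix.one_apply, sq] using this

lemma stiefel_entry {p q : ℕ} {A : Matrix (Fin p) (Fin q) ℝ} (hA : A ∈ Stiefel p q)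
    (i : Fin p) (j : Fin q) : |A i j| ≤ 1 := by
  have h1 : (A i j)^2 ≤ 1 := by
    rw [← stiefel_col hA j]
    exact Finset.single_le_sum (fun (i : Fin p) _ => sq_nonneg (A i j)) (Finset.mem_univ i)
  exact (sq_le_one_iff_abs_le_one _).1 h1

section PsiFacts
variable {ψ : ℝ → ℝ} {lam : ℝ}

lemma psi_pow_doubling (hψ0 : ψ 0 = 0) (hψnn : ∀ r : ℝ, 0 ≤ r → 0 ≤ ψ r)
    (hψlam : ∀ r : ℝ, 0 < r → ψ (2 * r) ≤ lam * ψ r) (m : ℕ) :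
    ∀ r : ℝ, 0 ≤ r → ψ (2^m * r) ≤ (max lam 1)^m * ψ r := by
  induction m with
  | zero => intro r hr; simp
  | succ m ih =>
    intro r hr
    rcases eq_or_lt_of_le hr with h0 | h0
    · simp [← h0, hψ0]
    · have h1 : (2:ℝ)^(m+1) * r = 2 * (2^m * r) := by ring
      have h2 : (0:ℝ) < 2^m * r := by positivity
      calc ψ (2^(m+1) * r) = ψ (2 * (2^m * r)) := by rw [h1]
        _ ≤ lam * ψ (2^m * r) := hψlam _ h2
        _ ≤ (max lam 1) * ((max lam 1)^m * ψ r) := by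
            have hpos := hψnn _ h2.le
            have := ih r hr
            have hle : lam ≤ max lam 1 := le_max_left _ _
            have h1le : (0:ℝ) ≤ max lam 1 := le_trans zero_le_one (le_max_right _ _)
            nlinarith
        _ = (max lam 1)^(m+1) * ψ r := by ring

lemma psi_env_bound (hψ0 : ψ 0 = 0) (hψnn : ∀ r : ℝ, 0 ≤ r → 0 ≤ ψ r)
    (hψm : MonotoneOn ψ (Set.Ici 0))
    (hψlam : ∀ r : ℝ, 0 < r → ψ (2 * r) ≤ lam * ψ r)
    {M : ℝ} (hM : 0 < M) (q : ℕ) (s : ℝ) (hs0 : 0 ≤ s) {x : ℝ} (hx : 0 ≤ x)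
    (hsb : s ≤ Real.sqrt q * x + M) :
    ψ s ≤ (max lam 1)^(q+2) * (ψ x + ψ M) := by
  have hq : Real.sqrt q ≤ (q:ℝ) := by
    have hq' : (q:ℝ) ≤ (q:ℝ)^2 := by
      rcases Nat.eq_zero_or_pos q with h | h
      · simp [h]
      · have h1 : (1:ℝ) ≤ (q:ℝ) := by exact_mod_cast h
        nlinarith
    have h := Real.sqrt_le_sqrt hq'
    rwa [Real.sqrt_sq (by positivity)] at h
  have hq2 : (q:ℝ) ≤ 2^q := by exact_mod_cast (Nat.lt_two_pow_self (n := q)).le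
  set mx := max x M with hmx
  have hmx0 : 0 < mx := lt_of_lt_of_le hM (le_max_right _ _)
  have hb : s ≤ 2^(q+2) * mx := by
    have h1 : Real.sqrt q * x ≤ 2^q * mx := by
      have : Real.sqrt q * x ≤ (q:ℝ) * x := by nlinarith [Real.sqrt_nonneg (q:ℝ)]
      have h2 : (q:ℝ) * x ≤ 2^q * mx := by
        have : x ≤ mx := le_max_left _ _
        nlinarith [pow_pos (show (0:ℝ) < 2 by norm_num) q]
      linarith
    have h3 : M ≤ 2^q * mx := by
      have : M ≤ mx := le_max_right _ _
      nlinarith [one_le_pow₀ (show (1:ℝ) ≤ 2 by norm_num) (n := q)]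
    have : (2:ℝ)^q + 2^q ≤ 2^(q+2) := by
      rw [pow_add]; nlinarith [pow_pos (show (0:ℝ) < 2 by norm_num) q]
    nlinarith [pow_pos (show (0:ℝ) < 2 by norm_num) q, hmx0]
  calc ψ s ≤ ψ (2^(q+2) * mx) := hψm (Set.mem_Ici.2 hs0)
        (Set.mem_Ici.2 (by positivity)) hb
    _ ≤ (max lam 1)^(q+2) * ψ mx := psi_pow_doubling hψ0 hψnn hψlam _ mx hmx0.le
    _ ≤ (max lam 1)^(q+2) * (ψ x + ψ M) := by
        have h1le : (0:ℝ) ≤ (max lam 1)^(q+2) := by positivity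
        have hψx := hψnn x hx
        have hψM := hψnn M hM.le
        have : ψ mx ≤ ψ x + ψ M := by
          rcases max_cases x M with ⟨h, _⟩ | ⟨h, _⟩ <;> rw [hmx, h] <;> linarith
        nlinarith

end PsiFacts

/-- Loss parametrized by a tuple of centers and a matrix. -/
def tupLoss {p q k : ℕ} [NeZero k] (ψ : ℝ → ℝ) (f : Fin k → EuclideanSpace ℝ (Fin q))
    (A : Matrix (Fin p) (Fin q) ℝ) (x : EuclideanSpace ℝ (Fin p)) : ℝ :=
  Finset.univ.inf' Finset.univ_nonempty (fun i => ψ ‖mulVecT A x - f i‖)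

/-- The compact tuple-parameter space. -/
def Kset (p q k : ℕ) (M : ℝ) :
    Set ((Fin k → EuclideanSpace ℝ (Fin q)) × (Fin p → Fin q → ℝ)) :=
  {t | (∀ i, ‖t.1 i‖ ≤ M) ∧ Matrix.of t.2 ∈ Stiefel p q}

lemma abs_inf'_sub_inf'_le {ι : Type*} (s : Finset ι) (hs : s.Nonempty) (f g : ι → ℝ)
    {ε : ℝ} (h : ∀ i ∈ s, |f i - g i| ≤ ε) : |s.inf' hs f - s.inf' hs g| ≤ ε := by
  have key : ∀ (f g : ι → ℝ), (∀ i ∈ s, |f i - g i| ≤ ε) →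
      s.inf' hs f - s.inf' hs g ≤ ε := by
    intro f g h
    obtain ⟨j, hj, hgj⟩ := s.exists_mem_eq_inf' hs g
    have h1 : s.inf' hs f ≤ f j := Finset.inf'_le _ hj
    have h2 := (abs_le.1 (h j hj)).2
    rw [hgj]; linarith
  have h' : ∀ i ∈ s, |g i - f i| ≤ ε := fun i hi => by rw [abs_sub_comm]; exact h i hi
  rw [abs_le]
  exact ⟨by linarith [key g f h'], key f g h⟩

section TupFacts
variable {p q k : ℕ} [NeZero k] {ψ : ℝ → ℝ} {lam M : ℝ}

lemma tupLoss_nonneg (hψnn : ∀ r : ℝ, 0 ≤ r → 0 ≤ ψ r)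
    (f : Fin k → EuclideanSpace ℝ (Fin q)) (A : Matrix (Fin p) (Fin q) ℝ)
    (x : EuclideanSpace ℝ (Fin p)) : 0 ≤ tupLoss ψ f A x := by
  rw [tupLoss, Finset.le_inf'_iff]
  exact fun i _ => hψnn _ (norm_nonneg _)

lemma tupLoss_le_env (hψ0 : ψ 0 = 0) (hψnn : ∀ r : ℝ, 0 ≤ r → 0 ≤ ψ r)
    (hψm : MonotoneOn ψ (Set.Ici 0))
    (hψlam : ∀ r : ℝ, 0 < r → ψ (2 * r) ≤ lam * ψ r) (hM : 0 < M)
    {t : (Fin k → EuclideanSpace ℝ (Fin q)) × (Fin p → Fin q → ℝ)}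
    (ht : t ∈ Kset p q k M) (x : EuclideanSpace ℝ (Fin p)) :
    tupLoss ψ t.1 (Matrix.of t.2) x ≤ (max lam 1)^(q+2) * (ψ ‖x‖ + ψ M) := by
  have h0 : tupLoss ψ t.1 (Matrix.of t.2) x ≤ ψ ‖mulVecT (Matrix.of t.2) x - t.1 0‖ :=
    Finset.inf'_le _ (Finset.mem_univ 0)
  refine h0.trans (psi_env_bound hψ0 hψnn hψm hψlam hM q _ (norm_nonneg _) (norm_nonneg x) ?_)
  have h1 : ‖mulVecT (Matrix.of t.2) x‖ ≤ Real.sqrt q * 1 * ‖x‖ :=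
    norm_mulVecT_le _ zero_le_one
      (fun j => by rw [one_pow, ← stiefel_col ht.2 j]) x
  calc ‖mulVecT (Matrix.of t.2) x - t.1 0‖ ≤ ‖mulVecT (Matrix.of t.2) x‖ + ‖t.1 0‖ :=
        norm_sub_le _ _
    _ ≤ Real.sqrt q * ‖x‖ + M := by
        have := ht.1 0
        rw [mul_one] at h1
        linarith

end TupFacts

lemma mulVecT_sub {p q : ℕ} (A B : Matrix (Fin p) (Fin q) ℝ) (x : EuclideanSpace ℝ (Fin p)) :
    mulVecT A x - mulVecT B x = mulVecT (A - B) x := by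
  apply PiLp.ext
  intro j
  have hj : (mulVecT A x - mulVecT B x) j = mulVecT A x j - mulVecT B x j := rfl
  rw [hj, mulVecT_apply, mulVecT_apply, mulVecT_apply, ← Finset.sum_sub_distrib]
  exact Finset.sum_congr rfl (fun i _ => by rw [Matrix.sub_apply]; ring)

section CloseFacts
variable {p q k : ℕ} [NeZero k] {ψ : ℝ → ℝ} {M : ℝ}

lemma tupLoss_close (hM : 0 < M) {R η ε δ : ℝ} (hR : 0 ≤ R) (hδ : 0 < δ)
    (hUC : ∀ r r', r ∈ Set.Icc 0 (Real.sqrt q * R + M) →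
      r' ∈ Set.Icc 0 (Real.sqrt q * R + M) → |r - r'| < η → |ψ r - ψ r'| ≤ ε)
    (hδη : δ * (Real.sqrt q * Real.sqrt p * R + 1) < η)
    {s t : (Fin k → EuclideanSpace ℝ (Fin q)) × (Fin p → Fin q → ℝ)}
    (hs : s ∈ Kset p q k M) (ht : t ∈ Kset p q k M)
    (hc1 : ∀ i, ‖s.1 i - t.1 i‖ ≤ δ) (hc2 : ∀ i j, |s.2 i j - t.2 i j| ≤ δ)
    (x : EuclideanSpace ℝ (Fin p)) (hx : ‖x‖ ≤ R) :
    |tupLoss ψ s.1 (Matrix.of s.2) x - tupLoss ψ t.1 (Matrix.of t.2) x| ≤ ε := by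
  refine abs_inf'_sub_inf'_le _ _ _ _ (fun i _ => ?_)
  set a := ‖mulVecT (Matrix.of s.2) x - s.1 i‖ with ha
  set b := ‖mulVecT (Matrix.of t.2) x - t.1 i‖ with hb
  have hbound : ∀ (u : (Fin k → EuclideanSpace ℝ (Fin q)) × (Fin p → Fin q → ℝ)),
      u ∈ Kset p q k M → ‖mulVecT (Matrix.of u.2) x - u.1 i‖ ≤ Real.sqrt q * R + M := by
    intro u hu
    have h1 : ‖mulVecT (Matrix.of u.2) x‖ ≤ Real.sqrt q * 1 * ‖x‖ :=
      norm_mulVecT_le _ zero_le_one (fun j => by rw [one_pow, ← stiefel_col hu.2 j]) x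
    have h2 := hu.1 i
    have h3 := norm_sub_le (mulVecT (Matrix.of u.2) x) (u.1 i)
    have hsq : (0:ℝ) ≤ Real.sqrt q := Real.sqrt_nonneg _
    rw [mul_one] at h1
    nlinarith [norm_nonneg x]
  have hab : |a - b| < η := by
    have h1 : |a - b| ≤ ‖(mulVecT (Matrix.of s.2) x - s.1 i) -
        (mulVecT (Matrix.of t.2) x - t.1 i)‖ := abs_norm_sub_norm_le _ _
    have h2 : (mulVecT (Matrix.of s.2) x - s.1 i) - (mulVecT (Matrix.of t.2) x - t.1 i) =
        (mulVecT (Matrix.of s.2) x - mulVecT (Matrix.of t.2) x) - (s.1 i - t.1 i) := by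
      abel
    have h3 : ‖mulVecT (Matrix.of s.2) x - mulVecT (Matrix.of t.2) x‖ ≤
        Real.sqrt q * (Real.sqrt p * δ) * ‖x‖ := by
      rw [mulVecT_sub]
      refine norm_mulVecT_le _ (by positivity) (fun j => ?_) x
      have : ∀ i' : Fin p, ((Matrix.of s.2 - Matrix.of t.2) i' j)^2 ≤ δ^2 := by
        intro i'
        have h4 : |s.2 i' j - t.2 i' j| ≤ δ := hc2 i' j
        have h5 : (Matrix.of s.2 - Matrix.of t.2) i' j = s.2 i' j - t.2 i' j := rfl
        rw [h5, ← sq_abs]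
        nlinarith [abs_nonneg (s.2 i' j - t.2 i' j)]
      calc ∑ i', ((Matrix.of s.2 - Matrix.of t.2) i' j)^2 ≤ ∑ _i' : Fin p, δ^2 :=
            Finset.sum_le_sum (fun i' _ => this i')
        _ = (p:ℝ) * δ^2 := by simp [Finset.sum_const, mul_comm]
        _ ≤ (Real.sqrt p * δ)^2 := by
            rw [mul_pow, Real.sq_sqrt (by positivity : (0:ℝ) ≤ (p:ℝ))]
    have h6 : ‖(mulVecT (Matrix.of s.2) x - mulVecT (Matrix.of t.2) x) - (s.1 i - t.1 i)‖ ≤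
        Real.sqrt q * (Real.sqrt p * δ) * ‖x‖ + δ := by
      have := norm_sub_le (mulVecT (Matrix.of s.2) x - mulVecT (Matrix.of t.2) x) (s.1 i - t.1 i)
      have h7 := hc1 i
      linarith
    have h8 : Real.sqrt q * (Real.sqrt p * δ) * ‖x‖ + δ ≤ δ * (Real.sqrt q * Real.sqrt p * R + 1) := by
      have hsq : (0:ℝ) ≤ Real.sqrt q := Real.sqrt_nonneg _
      have hsp : (0:ℝ) ≤ Real.sqrt p := Real.sqrt_nonneg _
      have h9 : δ * ‖x‖ ≤ δ * R := mul_le_mul_of_nonneg_left hx hδ.le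
      nlinarith [mul_le_mul_of_nonneg_left h9 (mul_nonneg hsq hsp)]
    calc |a - b| ≤ _ := h1
      _ = ‖(mulVecT (Matrix.of s.2) x - mulVecT (Matrix.of t.2) x) - (s.1 i - t.1 i)‖ := by rw [h2]
      _ ≤ Real.sqrt q * (Real.sqrt p * δ) * ‖x‖ + δ := h6
      _ ≤ δ * (Real.sqrt q * Real.sqrt p * R + 1) := h8
      _ < η := hδη
  exact hUC a b ⟨norm_nonneg _, hbound s hs⟩ ⟨norm_nonneg _, hbound t ht⟩ hab

end CloseFacts

lemma continuous_mulVecT {p q : ℕ} (A : Matrix (Fin p) (Fin q) ℝ) :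
    Continuous (fun x : EuclideanSpace ℝ (Fin p) => mulVecT A x) := by
  have h1 : Continuous (fun v : Fin p → ℝ => A.transpose.mulVec v) := by
    refine continuous_pi (fun j => ?_)
    simp only [Matrix.mulVec, dotProduct]
    exact continuous_finset_sum _ (fun i _ => (continuous_const.mul (continuous_apply i)))
  exact (PiLp.continuous_toLp 2 (fun _ : Fin q => ℝ)).comp
    (h1.comp (PiLp.continuous_ofLp 2 (fun _ : Fin p => ℝ)))

lemma continuous_tupLoss {p q k : ℕ} [NeZero k] {ψ : ℝ → ℝ}
    (hψc : ContinuousOn ψ (Set.Ici 0)) (f : Fin k → EuclideanSpace ℝ (Fin q))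
    (A : Matrix (Fin p) (Fin q) ℝ) : Continuous (tupLoss ψ f A) := by
  unfold tupLoss
  refine Continuous.finset_inf'_apply Finset.univ_nonempty (fun i _ => ?_)
  refine hψc.comp_continuous (((continuous_mulVecT A).sub continuous_const).norm)
    (fun x => Set.mem_Ici.2 (norm_nonneg _))



/-- Any parameter in `XiStar` is represented by a tuple parameter in `Kset`. -/
lemma exists_tuple_rep {p q k : ℕ} [NeZero k] {M : ℝ} (ψ : ℝ → ℝ)
    {θ : Param p q} (hθ : θ ∈ XiStar p q k M) :
    ∃ t ∈ Kset p q k M, ∀ x, lossFn ψ θ.1 θ.2 x = tupLoss ψ t.1 (Matrix.of t.2) x := by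
  obtain ⟨⟨hne, hcard, hst⟩, hball⟩ := hθ
  classical
  set L := θ.1.toList with hL
  have hlen : L.length = θ.1.card := Finset.length_toList _
  have hmemL : ∀ a, a ∈ L ↔ a ∈ θ.1 := fun a => Finset.mem_toList
  obtain ⟨c, hc⟩ := hne
  set f : Fin k → EuclideanSpace ℝ (Fin q) :=
    fun i => if h : (i : ℕ) < L.length then L.get ⟨i, h⟩ else c with hf
  have hfmem : ∀ i, f i ∈ θ.1 := by
    intro i
    rw [hf]
    by_cases h : (i : ℕ) < L.length
    · simp only [dif_pos h]
      exact (hmemL _).1 (L.get_mem _)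
    · simpa [dif_neg h] using hc
  have himg : Finset.image f Finset.univ = θ.1 := by
    apply Finset.Subset.antisymm
    · intro a ha
      obtain ⟨i, _, rfl⟩ := Finset.mem_image.1 ha
      exact hfmem i
    · intro a ha
      obtain ⟨n, hn⟩ := List.mem_iff_get.1 ((hmemL a).2 ha)
      have hnk : (n : ℕ) < k := lt_of_lt_of_le n.2 (hlen ▸ hcard)
      refine Finset.mem_image.2 ⟨⟨n, hnk⟩, Finset.mem_univ _, ?_⟩
      rw [hf]
      simp only [dif_pos (show ((⟨(n:ℕ), hnk⟩ : Fin k) : ℕ) < L.length from n.2)]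
      exact hn
  refine ⟨(f, Matrix.of.symm θ.2), ⟨?_, ?_⟩, ?_⟩
  · intro i
    exact mem_closedBall_zero_iff.1 (hball (hfmem i))
  · rw [Equiv.apply_symm_apply]
    exact hst
  · intro x
    have hne' : (Finset.image f Finset.univ).Nonempty := himg ▸ ⟨c, hc⟩
    have h1 : lossFn ψ θ.1 θ.2 x = θ.1.inf' ⟨c, hc⟩ (fun a => ψ ‖mulVecT θ.2 x - a‖) :=
      dif_pos _
    have h2 : θ.1.inf' ⟨c, hc⟩ (fun a => ψ ‖mulVecT θ.2 x - a‖) =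
        (Finset.image f Finset.univ).inf' hne' (fun a => ψ ‖mulVecT θ.2 x - a‖) := by
      congr 1
      · exact himg.symm
    rw [h1, h2, Finset.inf'_image]
    simp only [tupLoss, Equiv.apply_symm_apply]
    rfl


lemma isCompact_Kset {p q k : ℕ} {M : ℝ} (hM : 0 < M) : IsCompact (Kset p q k M) := by
  have hclosed : IsClosed (Kset p q k M) := by
    have h1 : Kset p q k M =
        (⋂ i : Fin k, {t : (Fin k → EuclideanSpace ℝ (Fin q)) × (Fin p → Fin q → ℝ) |
          ‖t.1 i‖ ≤ M}) ∩
        (⋂ j : Fin q, ⋂ j' : Fin q,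
          {t : (Fin k → EuclideanSpace ℝ (Fin q)) × (Fin p → Fin q → ℝ) |
            ∑ i, t.2 i j * t.2 i j' = ((1 : Matrix (Fin q) (Fin q) ℝ) j j')}) := by
      ext t
      simp only [Kset, Set.mem_setOf_eq, Set.mem_inter_iff, Set.mem_iInter]
      constructor
      · rintro ⟨h1, h2⟩
        refine ⟨h1, fun j j' => ?_⟩
        have := congr_fun (congr_fun h2 j) j'
        simpa [Matrix.mul_apply, Matrix.transpose_apply] using this
      · rintro ⟨h1, h2⟩
        refine ⟨h1, ?_⟩
        ext j j'
        simpa [Matrix.mul_apply, Matrix.transpose_apply] using h2 j j'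
    rw [h1]
    refine IsClosed.inter (isClosed_iInter fun i => ?_) (isClosed_iInter fun j =>
      isClosed_iInter fun j' => ?_)
    · exact isClosed_le (Continuous.norm (by fun_prop)) continuous_const
    · refine isClosed_eq (continuous_finset_sum _ fun i _ => Continuous.mul ?_ ?_)
        continuous_const <;> fun_prop
  have hsub : Kset p q k M ⊆ closedBall 0 (M + 1) := by
    intro t ht
    rw [mem_closedBall_zero_iff]
    rw [Prod.norm_def]
    have h1 : ‖t.1‖ ≤ M := by
      refine (pi_norm_le_iff_of_nonneg hM.le).2 (fun i => ht.1 i)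
    have h2 : ‖t.2‖ ≤ 1 := by
      refine (pi_norm_le_iff_of_nonneg zero_le_one).2 (fun i => ?_)
      refine (pi_norm_le_iff_of_nonneg zero_le_one).2 (fun j => ?_)
      simpa using stiefel_entry ht.2 i j
    rcases max_cases ‖t.1‖ ‖t.2‖ with ⟨h, _⟩ | ⟨h, _⟩ <;> rw [h] <;> linarith
  exact (isCompact_closedBall 0 (M + 1)).of_isClosed_subset hclosed hsub

lemma empMeasure_integral {p : ℕ} {Ω : Type} [MeasurableSpace Ω]
    (X : ℕ → Ω → EuclideanSpace ℝ (Fin p)) (ω : Ω) (n : ℕ)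
    (f : EuclideanSpace ℝ (Fin p) → ℝ) (hf : Measurable f) :
    ∫ x, f x ∂(empMeasure X ω n) = (n : ℝ)⁻¹ * ∑ i ∈ Finset.range n, f (X i ω) := by
  rcases Nat.eq_zero_or_pos n with h | h
  · subst h
    simp [empMeasure]
  have hInt : ∀ i ∈ Finset.range n, Integrable f (Measure.dirac (X i ω)) := by
    intro i _
    exact (integrable_const (f (X i ω))).congr (ae_eq_dirac f).symm
  rw [empMeasure, integral_smul_measure, integral_finset_sum_measure hInt]
  have : ∀ i ∈ Finset.range n, ∫ x, f x ∂(Measure.dirac (X i ω)) = f (X i ω) :=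
    fun i _ => integral_dirac f (X i ω)
  rw [Finset.sum_congr rfl this]
  have hn : ((n : ℝ≥0∞)⁻¹).toReal = (n : ℝ)⁻¹ := by
    rw [ENNReal.toReal_inv]
    simp
  rw [hn, smul_eq_mul]


lemma slln_comp {p : ℕ} {Ω : Type} [MeasurableSpace Ω] (μ : Measure Ω)
    [IsProbabilityMeasure μ] (P : Measure (EuclideanSpace ℝ (Fin p)))
    (X : ℕ → Ω → EuclideanSpace ℝ (Fin p)) (hXmeas : ∀ i, Measurable (X i))
    (hXindep : iIndepFun X μ) (hXlaw : ∀ i, μ.map (X i) = P)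
    (f : EuclideanSpace ℝ (Fin p) → ℝ) (hf : Measurable f) (hfint : Integrable f P) :
    ∀ᵐ ω ∂μ, Tendsto (fun n : ℕ => (n : ℝ)⁻¹ * ∑ i ∈ Finset.range n, f (X i ω)) atTop
      (nhds (∫ x, f x ∂P)) := by
  have hint0 : Integrable (fun ω => f (X 0 ω)) μ := by
    have h := (integrable_map_measure (μ := μ) (f := X 0) hf.aestronglyMeasurable
      (hXmeas 0).aemeasurable)
    rw [hXlaw 0] at h
    exact h.1 hfint
  have hindep : Pairwise (Function.onFun (IndepFun · · μ) (fun i ω => f (X i ω))) := by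
    intro i j hij
    exact (hXindep.indepFun hij).comp hf hf
  have hident : ∀ i, IdentDistrib (fun ω => f (X i ω)) (fun ω => f (X 0 ω)) μ μ := by
    intro i
    refine ⟨(hf.comp (hXmeas i)).aemeasurable, (hf.comp (hXmeas 0)).aemeasurable, ?_⟩
    have h1 : μ.map (fun ω => f (X i ω)) = (μ.map (X i)).map f :=
      (Measure.map_map hf (hXmeas i)).symm
    have h2 : μ.map (fun ω => f (X 0 ω)) = (μ.map (X 0)).map f :=
      (Measure.map_map hf (hXmeas 0)).symm
    rw [h1, h2, hXlaw i, hXlaw 0]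
  have hlln := strong_law_ae _ hint0 hindep hident
  have heq : μ[fun ω => f (X 0 ω)] = ∫ x, f x ∂P := by
    rw [← hXlaw 0, integral_map (hXmeas 0).aemeasurable hf.aestronglyMeasurable]
  rw [heq] at hlln
  filter_upwards [hlln] with ω hω
  simpa [smul_eq_mul] using hω


/-- Envelope function for the loss class. -/
def envF (ψ : ℝ → ℝ) (lam M : ℝ) (p q : ℕ) (x : EuclideanSpace ℝ (Fin p)) : ℝ :=
  (max lam 1)^(q+2) * (ψ ‖x‖ + ψ M)

/-- Tail part of the envelope. -/
def tailF (ψ : ℝ → ℝ) (lam M : ℝ) (p q : ℕ) (R : ℝ) (x : EuclideanSpace ℝ (Fin p)) : ℝ :=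
  if R < ‖x‖ then envF ψ lam M p q x else 0

section EnvFacts
variable {p q : ℕ} {ψ : ℝ → ℝ} {lam M : ℝ}

lemma continuous_psi_norm (hψc : ContinuousOn ψ (Set.Ici 0)) :
    Continuous (fun x : EuclideanSpace ℝ (Fin p) => ψ ‖x‖) :=
  hψc.comp_continuous continuous_norm (fun x => Set.mem_Ici.2 (norm_nonneg x))

lemma continuous_envF (hψc : ContinuousOn ψ (Set.Ici 0)) :
    Continuous (envF ψ lam M p q) := by
  unfold envF
  exact continuous_const.mul ((continuous_psi_norm hψc).add continuous_const)

lemma measurable_tailF (hψc : ContinuousOn ψ (Set.Ici 0)) (R : ℝ) :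
    Measurable (tailF ψ lam M p q R) := by
  unfold tailF
  exact Measurable.ite (measurableSet_lt measurable_const continuous_norm.measurable)
    (continuous_envF hψc).measurable measurable_const

lemma envF_nonneg (hψnn : ∀ r : ℝ, 0 ≤ r → 0 ≤ ψ r) (hM : 0 < M)
    (x : EuclideanSpace ℝ (Fin p)) : 0 ≤ envF ψ lam M p q x := by
  unfold envF
  have h1 := hψnn _ (norm_nonneg x)
  have h2 := hψnn _ hM.le
  positivity

lemma tailF_nonneg (hψnn : ∀ r : ℝ, 0 ≤ r → 0 ≤ ψ r) (hM : 0 < M) (R : ℝ)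
    (x : EuclideanSpace ℝ (Fin p)) : 0 ≤ tailF ψ lam M p q R x := by
  unfold tailF
  split
  · exact envF_nonneg hψnn hM x
  · exact le_refl 0

lemma tailF_le_envF (hψnn : ∀ r : ℝ, 0 ≤ r → 0 ≤ ψ r) (hM : 0 < M) (R : ℝ)
    (x : EuclideanSpace ℝ (Fin p)) : tailF ψ lam M p q R x ≤ envF ψ lam M p q x := by
  unfold tailF
  split
  · exact le_refl _
  · exact envF_nonneg hψnn hM x

lemma integrable_envF (hψc : ContinuousOn ψ (Set.Ici 0))
    {P : Measure (EuclideanSpace ℝ (Fin p))} [IsProbabilityMeasure P]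
    (hint : Integrable (fun x => ψ ‖x‖) P) : Integrable (envF ψ lam M p q) P := by
  unfold envF
  exact (hint.add (integrable_const (ψ M))).const_mul _

lemma integrable_tailF (hψc : ContinuousOn ψ (Set.Ici 0))
    (hψnn : ∀ r : ℝ, 0 ≤ r → 0 ≤ ψ r) (hM : 0 < M)
    {P : Measure (EuclideanSpace ℝ (Fin p))} [IsProbabilityMeasure P]
    (hint : Integrable (fun x => ψ ‖x‖) P) (R : ℝ) :
    Integrable (tailF ψ lam M p q R) P := by
  refine (integrable_envF (lam := lam) (M := M) (q := q) hψc hint).mono (measurable_tailF hψc R).aestronglyMeasurable ?_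
  refine Filter.Eventually.of_forall (fun x => ?_)
  rw [Real.norm_eq_abs, Real.norm_eq_abs, abs_of_nonneg (tailF_nonneg hψnn hM R x),
    abs_of_nonneg (envF_nonneg hψnn hM x)]
  exact tailF_le_envF hψnn hM R x

lemma tendsto_integral_tailF (hψc : ContinuousOn ψ (Set.Ici 0))
    (hψnn : ∀ r : ℝ, 0 ≤ r → 0 ≤ ψ r) (hM : 0 < M)
    {P : Measure (EuclideanSpace ℝ (Fin p))} [IsProbabilityMeasure P]
    (hint : Integrable (fun x => ψ ‖x‖) P) :
    Tendsto (fun R : ℕ => ∫ x, tailF ψ lam M p q R x ∂P) atTop (nhds 0) := by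
  have h := tendsto_integral_of_dominated_convergence (μ := P)
    (F := fun R : ℕ => tailF ψ lam M p q R) (f := fun _ => (0:ℝ))
    (envF ψ lam M p q)
    (fun R => (measurable_tailF hψc R).aestronglyMeasurable)
    (integrable_envF hψc hint)
    (fun R => Filter.Eventually.of_forall (fun x => by
      rw [Real.norm_eq_abs, abs_of_nonneg (tailF_nonneg hψnn hM R x)]
      exact tailF_le_envF hψnn hM R x))
    (Filter.Eventually.of_forall (fun x => ?_))
  · simpa using h
  · have : ∀ᶠ R : ℕ in atTop, tailF ψ lam M p q R x = 0 := by
      obtain ⟨N, hN⟩ := exists_nat_ge ‖x‖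
      refine eventually_atTop.2 ⟨N, fun R hR => ?_⟩
      have : ¬ ((R:ℝ) < ‖x‖) := not_lt.2 (hN.trans (by exact_mod_cast hR))
      simp [tailF, this]
    exact Tendsto.congr' (this.mono (fun R hR => hR.symm)) tendsto_const_nhds

end EnvFacts

/-- **Uniform strong law of large numbers for the FKM loss class.** -/
theorem uniform_SLLN_FKM {p q k : ℕ} (hp : 0 < p) (hq : 0 < q)
    (hk : 0 < k) (hqp : q < p)
    (ψ : ℝ → ℝ) (lam : ℝ) (hlam : 0 < lam)
    (hψ0 : ψ 0 = 0) (hψnn : ∀ r : ℝ, 0 ≤ r → 0 ≤ ψ r)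
    (hψc : ContinuousOn ψ (Set.Ici 0)) (hψm : MonotoneOn ψ (Set.Ici 0))
    (hψlam : ∀ r : ℝ, 0 < r → ψ (2 * r) ≤ lam * ψ r)
    (M : ℝ) (hM : 0 < M)
    (P : Measure (EuclideanSpace ℝ (Fin p))) [IsProbabilityMeasure P]
    {Ω : Type} [MeasurableSpace Ω] (μ : Measure Ω) [IsProbabilityMeasure μ]
    (X : ℕ → Ω → EuclideanSpace ℝ (Fin p))
    (hXmeas : ∀ i, Measurable (X i))
    (hXindep : iIndepFun X μ)
    (hXlaw : ∀ i, μ.map (X i) = P)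
    (hint : Integrable (fun x => ψ ‖x‖) P) :
    ∀ᵐ ω ∂μ,
      Tendsto (fun n =>
          sSup ((fun θ : Param p q =>
            |∫ x, lossFn ψ θ.1 θ.2 x ∂(empMeasure X ω n) - ∫ x, lossFn ψ θ.1 θ.2 x ∂P|)
              '' XiStar p q k M))
        atTop (nhds 0) := by

  haveI : NeZero k := ⟨hk.ne'⟩
  classical
  -- abbreviations
  set env : EuclideanSpace ℝ (Fin p) → ℝ := envF ψ lam M p q with henvdef
  set tail : ℝ → EuclideanSpace ℝ (Fin p) → ℝ := tailF ψ lam M p q with htaildef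
  set G : ((Fin k → EuclideanSpace ℝ (Fin q)) × (Fin p → Fin q → ℝ)) →
      EuclideanSpace ℝ (Fin p) → ℝ := fun t => tupLoss ψ t.1 (Matrix.of t.2) with hGdef
  have hGmeas : ∀ t, Measurable (G t) := fun t => (continuous_tupLoss hψc _ _).measurable
  have hGnn : ∀ t x, 0 ≤ G t x := fun t x => tupLoss_nonneg hψnn _ _ x
  have hGle : ∀ t ∈ Kset p q k M, ∀ x, G t x ≤ env x :=
    fun t ht x => tupLoss_le_env hψ0 hψnn hψm hψlam hM ht x
  have henvnn : ∀ x, 0 ≤ env x := fun x => envF_nonneg hψnn hM x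
  have htailnn : ∀ R x, 0 ≤ tail R x := fun R x => tailF_nonneg hψnn hM R x
  have henvint : Integrable env P := integrable_envF hψc hint
  have hGint : ∀ t ∈ Kset p q k M, Integrable (G t) P := by
    intro t ht
    refine henvint.mono (hGmeas t).aestronglyMeasurable (Filter.Eventually.of_forall fun x => ?_)
    rw [Real.norm_eq_abs, Real.norm_eq_abs, abs_of_nonneg (hGnn t x),
      abs_of_nonneg (henvnn x)]
    exact hGle t ht x
  have htailmeas : ∀ R : ℝ, Measurable (tail R) := fun R => measurable_tailF hψc R
  have htailint : ∀ R : ℝ, Integrable (tail R) P := fun R =>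
    integrable_tailF hψc hψnn hM hint R
  -- for every m, a radius, a finite net and the approximation property
  have hchoice : ∀ m : ℕ, ∃ (R : ℕ)
      (net : Finset ((Fin k → EuclideanSpace ℝ (Fin q)) × (Fin p → Fin q → ℝ))),
      (∀ t ∈ net, t ∈ Kset p q k M) ∧
      (∫ x, tail R x ∂P ≤ 1/(m+1)) ∧
      (∀ t ∈ Kset p q k M, ∃ t₀ ∈ net, ∀ x,
        |G t x - G t₀ x| ≤ 1/(m+1) + 2 * tail R x) := by
    intro m
    have hem : (0:ℝ) < 1/(m+1) := by positivity
    -- choose the radius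
    obtain ⟨R, hR⟩ : ∃ R : ℕ, ∫ x, tail R x ∂P ≤ 1/(m+1) := by
      have h := (tendsto_order.1 (tendsto_integral_tailF (lam := lam) (M := M) (p := p)
        (q := q) hψc hψnn hM hint)).2 (1/(m+1)) hem
      exact ⟨h.exists.choose, h.exists.choose_spec.le⟩
    -- uniform continuity on the compact interval
    have hUCon : UniformContinuousOn ψ (Set.Icc 0 (Real.sqrt q * R + M)) :=
      isCompact_Icc.uniformContinuousOn_of_continuous (hψc.mono Set.Icc_subset_Ici_self)
    obtain ⟨η, hη, hUC⟩ := Metric.uniformContinuousOn_iff.1 hUCon _ hem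
    set D : ℝ := Real.sqrt q * Real.sqrt p * R + 1 with hDdef
    have hD : 0 < D := by
      have := mul_nonneg (mul_nonneg (Real.sqrt_nonneg (q:ℝ)) (Real.sqrt_nonneg (p:ℝ)))
        (Nat.cast_nonneg (α := ℝ) R)
      rw [hDdef]; linarith
    set δ : ℝ := η / (2 * D) with hδdef
    have hδ : 0 < δ := by positivity
    have hδη : δ * D < η := by
      rw [hδdef]
      rw [div_mul_eq_mul_div, mul_comm (2:ℝ) D, ← div_div]
      have h1 : η * D / D = η := by field_simp
      rw [h1]
      linarith
    -- finite net from compactness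
    obtain ⟨net, hnetK, hcover⟩ := (isCompact_Kset (p := p) (q := q) (k := k) hM).elim_nhds_subcover
      (fun t => ball t δ) (fun t _ => ball_mem_nhds t hδ)
    refine ⟨R, net, hnetK, hR, ?_⟩
    intro t ht
    obtain ⟨t₀, ht₀, htball⟩ := Set.mem_iUnion₂.1 (hcover ht)
    have ht₀K : t₀ ∈ Kset p q k M := hnetK t₀ ht₀
    refine ⟨t₀, ht₀, fun x => ?_⟩
    have hdist : dist t t₀ < δ := mem_ball.1 htball
    by_cases hxR : ‖x‖ ≤ (R:ℝ)
    · -- use uniform continuity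
      have hc1 : ∀ i, ‖t.1 i - t₀.1 i‖ ≤ δ := by
        intro i
        rw [← dist_eq_norm]
        calc dist (t.1 i) (t₀.1 i) ≤ dist t.1 t₀.1 := dist_le_pi_dist _ _ i
          _ ≤ dist t t₀ := by rw [Prod.dist_eq]; exact le_max_left _ _
          _ ≤ δ := hdist.le
      have hc2 : ∀ i j, |t.2 i j - t₀.2 i j| ≤ δ := by
        intro i j
        rw [← Real.dist_eq]
        calc dist (t.2 i j) (t₀.2 i j) ≤ dist (t.2 i) (t₀.2 i) := dist_le_pi_dist _ _ j
          _ ≤ dist t.2 t₀.2 := dist_le_pi_dist _ _ i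
          _ ≤ dist t t₀ := by rw [Prod.dist_eq]; exact le_max_right _ _
          _ ≤ δ := hdist.le
      have hUC' : ∀ r r', r ∈ Set.Icc 0 (Real.sqrt q * R + M) →
          r' ∈ Set.Icc 0 (Real.sqrt q * R + M) → |r - r'| < η → |ψ r - ψ r'| ≤ 1/(m+1) := by
        intro r r' hr hr' hrr
        have := hUC r hr r' hr' (by rwa [Real.dist_eq])
        rw [Real.dist_eq] at this
        exact this.le
      have := tupLoss_close (ψ := ψ) hM (Nat.cast_nonneg R) hδ hUC' hδη ht ht₀K hc1 hc2 x hxR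
      have h2 : (0:ℝ) ≤ tail R x := htailnn _ _
      calc |G t x - G t₀ x| ≤ 1/(m+1) := this
        _ ≤ 1/(m+1) + 2 * tail R x := by linarith
    · -- tail regime
      have htx : tail R x = env x := if_pos (not_le.1 hxR)
      have h1 := hGnn t x
      have h2 := hGnn t₀ x
      have h3 := hGle t ht x
      have h4 := hGle t₀ ht₀K x
      rw [abs_le]
      constructor <;> [skip; skip] <;> rw [htx] <;> nlinarith [hem.le]
  choose Rf netf hnetK htailb happrox using hchoice
  -- the almost sure event
  have hae : ∀ᵐ ω ∂μ, ∀ m : ℕ,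
      (Tendsto (fun n : ℕ => (n:ℝ)⁻¹ * ∑ i ∈ Finset.range n, tail (Rf m) (X i ω)) atTop
        (nhds (∫ x, tail (Rf m) x ∂P))) ∧
      (∀ t ∈ netf m, Tendsto (fun n : ℕ => (n:ℝ)⁻¹ * ∑ i ∈ Finset.range n, G t (X i ω)) atTop
        (nhds (∫ x, G t x ∂P))) := by
    rw [ae_all_iff]
    intro m
    have h1 := slln_comp μ P X hXmeas hXindep hXlaw (tail (Rf m)) (htailmeas _) (htailint _)
    have h2 : ∀ᵐ ω ∂μ, ∀ t ∈ netf m,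
        Tendsto (fun n : ℕ => (n:ℝ)⁻¹ * ∑ i ∈ Finset.range n, G t (X i ω)) atTop
          (nhds (∫ x, G t x ∂P)) := by
      rw [Filter.eventually_all_finset]
      intro t ht
      exact slln_comp μ P X hXmeas hXindep hXlaw (G t) (hGmeas t) (hGint t (hnetK m t ht))
    exact h1.and h2
  filter_upwards [hae] with ω hω
  rw [Metric.tendsto_atTop]
  intro ε hε
  -- choose m with 9/(m+1) < ε
  obtain ⟨m, hm⟩ := exists_nat_gt (9/ε)
  have hm1 : 9/ε < (m:ℝ)+1 := hm.trans (by linarith)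
  have hεm : (0:ℝ) < 1/(m+1) := by positivity
  have h9 : 9 * (1/((m:ℝ)+1)) < ε := by
    rw [div_lt_iff₀ hε] at hm1
    rw [mul_one_div, div_lt_iff₀ (by positivity : (0:ℝ) < (m:ℝ)+1)]
    linarith
  obtain ⟨hT, hN⟩ := hω m
  set τ : ℝ := ∫ x, tail (Rf m) x ∂P with hτdef
  have hτnn : 0 ≤ τ := integral_nonneg (htailnn _)
  -- eventual facts
  have hev1 : ∀ᶠ n : ℕ in atTop, 1 ≤ n := eventually_ge_atTop 1
  have hev2 : ∀ᶠ n : ℕ in atTop,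
      (n:ℝ)⁻¹ * ∑ i ∈ Finset.range n, tail (Rf m) (X i ω) ≤ 2 * (1/(m+1)) := by
    have h := hT.eventually (eventually_le_nhds (show τ < τ + 1/(m+1) by linarith))
    filter_upwards [h] with n hn
    have hb' := htailb m
    rw [← hτdef] at hb'
    calc (n:ℝ)⁻¹ * ∑ i ∈ Finset.range n, tail (Rf m) (X i ω) ≤ τ + 1/(m+1) := hn
      _ ≤ 2 * (1/(m+1)) := by linarith [hb']
  have hev3 : ∀ᶠ n : ℕ in atTop, ∀ t ∈ netf m,
      |(n:ℝ)⁻¹ * ∑ i ∈ Finset.range n, G t (X i ω) - ∫ x, G t x ∂P| ≤ 1/(m+1) := by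
    rw [Filter.eventually_all_finset]
    intro t ht
    have h := (hN t ht).eventually (eventually_abs_sub_lt _ hεm)
    filter_upwards [h] with n hn using hn.le
  rw [← Filter.eventually_atTop]
  filter_upwards [hev1, hev2, hev3] with n hn1 hn2 hn3
  have hnR : (0:ℝ) < (n:ℝ) := by exact_mod_cast hn1
  -- bound every element of the set by 9/(m+1)
  have hbound : ∀ v ∈ ((fun θ : Param p q =>
      |∫ x, lossFn ψ θ.1 θ.2 x ∂(empMeasure X ω n) - ∫ x, lossFn ψ θ.1 θ.2 x ∂P|)
        '' XiStar p q k M), v ≤ 9 * (1/(m+1)) := by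
    rintro v ⟨θ, hθ, rfl⟩
    obtain ⟨t, htK, hrep⟩ := exists_tuple_rep ψ hθ
    obtain ⟨t₀, ht₀, hdiff⟩ := happrox m t htK
    have ht₀K : t₀ ∈ Kset p q k M := hnetK m t₀ ht₀
    simp only [hrep]
    rw [empMeasure_integral X ω n _ (hGmeas t)]
    set a : ℝ := (n:ℝ)⁻¹ * ∑ i ∈ Finset.range n, G t (X i ω) with hadef
    set a₀ : ℝ := (n:ℝ)⁻¹ * ∑ i ∈ Finset.range n, G t₀ (X i ω) with ha0def
    set b : ℝ := ∫ x, G t x ∂P with hbdef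
    set b₀ : ℝ := ∫ x, G t₀ x ∂P with hb0def
    have key1 : |a - a₀| ≤ 1/(m+1) + 2 * ((n:ℝ)⁻¹ * ∑ i ∈ Finset.range n, tail (Rf m) (X i ω)) := by
      rw [hadef, ha0def, ← mul_sub, ← Finset.sum_sub_distrib, abs_mul,
        abs_of_nonneg (by positivity : (0:ℝ) ≤ (n:ℝ)⁻¹)]
      have h1 : |∑ i ∈ Finset.range n, (G t (X i ω) - G t₀ (X i ω))| ≤
          ∑ i ∈ Finset.range n, (1/(m+1) + 2 * tail (Rf m) (X i ω)) :=
        (Finset.abs_sum_le_sum_abs _ _).trans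
          (Finset.sum_le_sum (fun i _ => hdiff (X i ω)))
      have h2 : (n:ℝ)⁻¹ * ∑ i ∈ Finset.range n, (1/(m+1) + 2 * tail (Rf m) (X i ω)) =
          1/(m+1) + 2 * ((n:ℝ)⁻¹ * ∑ i ∈ Finset.range n, tail (Rf m) (X i ω)) := by
        rw [Finset.sum_add_distrib, Finset.sum_const, Finset.card_range, nsmul_eq_mul, mul_add,
          ← Finset.mul_sum]
        field_simp
      calc (n:ℝ)⁻¹ * |∑ i ∈ Finset.range n, (G t (X i ω) - G t₀ (X i ω))| ≤
          (n:ℝ)⁻¹ * ∑ i ∈ Finset.range n, (1/(m+1) + 2 * tail (Rf m) (X i ω)) := by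
            exact mul_le_mul_of_nonneg_left h1 (by positivity)
        _ = _ := h2
    have key2 : |a₀ - b₀| ≤ 1/(m+1) := hn3 t₀ ht₀
    have key3 : |b₀ - b| ≤ 1/(m+1) + 2 * τ := by
      rw [hb0def, hbdef, ← integral_sub (hGint t₀ ht₀K) (hGint t htK)]
      have h1 : |∫ x, (G t₀ x - G t x) ∂P| ≤ ∫ x, |G t₀ x - G t x| ∂P := by
        simpa [Real.norm_eq_abs] using
          norm_integral_le_integral_norm (μ := P) (fun x => G t₀ x - G t x)
      have h2 : ∫ x, |G t₀ x - G t x| ∂P ≤ ∫ x, (1/(m+1) + 2 * tail (Rf m) x) ∂P := by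
        refine integral_mono ((hGint t₀ ht₀K).sub (hGint t htK)).abs
          ((integrable_const _).add ((htailint _).const_mul 2)) (fun x => ?_)
        rw [abs_sub_comm]
        exact hdiff x
      have h3 : ∫ x, (1/((m:ℝ)+1) + 2 * tail (Rf m) x) ∂P = 1/(m+1) + 2 * τ := by
        rw [integral_add (integrable_const _) ((htailint _).const_mul 2),
          integral_const, integral_const_mul]
        simp [hτdef]
      linarith
    have hTb : (n:ℝ)⁻¹ * ∑ i ∈ Finset.range n, tail (Rf m) (X i ω) ≤ 2 * (1/(m+1)) := hn2
    have hτb : τ ≤ 1/(m+1) := htailb m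
    have habc : |a - b| ≤ |a - a₀| + |a₀ - b₀| + |b₀ - b| := by
      have h : a - b = (a - a₀) + (a₀ - b₀) + (b₀ - b) := by ring
      rw [h]
      exact abs_add_three _ _ _
    linarith
  have hnonneg : ∀ v ∈ ((fun θ : Param p q =>
      |∫ x, lossFn ψ θ.1 θ.2 x ∂(empMeasure X ω n) - ∫ x, lossFn ψ θ.1 θ.2 x ∂P|)
        '' XiStar p q k M), 0 ≤ v := by
    rintro v ⟨θ, hθ, rfl⟩
    exact abs_nonneg _
  rw [Real.dist_eq, sub_zero, abs_of_nonneg (Real.sSup_nonneg hnonneg)]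
  exact lt_of_le_of_lt (Real.sSup_le hbound (by positivity)) h9


end
end

section
/- Continuity of the population FKM loss: Let M be an arbitrary positive number. Suppose that ∫ ψ(‖x‖) P(dx) < ∞. Then the map (F, A) ↦ Ψ(F, A, P) is continuous on Θ_k*(M), where Θ_k*(M) carries the product metric combining the Frobenius distance between matrices and the Hausdorff distance between finite subsets of ℝ^q. -/
open MeasureTheory Metric Filter ProbabilityTheory
open scoped ENNReal Classical

noncomputable section

section AuxFKM

open MeasureTheory Metric Filter

variable {p q : ℕ}

private lemma fkm_norm_mulVecT_sq (A : Matrix (Fin p) (Fin q) ℝ) (x : EuclideanSpace ℝ (Fin p)) :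
    ‖mulVecT A x‖ = Real.sqrt (∑ j, (A.transpose.mulVec (WithLp.equiv 2 (Fin p → ℝ) x)) j ^ 2) := by
  rw [mulVecT, EuclideanSpace.norm_eq]
  congr 1
  refine Finset.sum_congr rfl fun j _ => ?_
  rw [WithLp.equiv_symm_apply, PiLp.toLp_apply, Real.norm_eq_abs, sq_abs]

private lemma fkm_norm_euclid {n : ℕ} (x : EuclideanSpace ℝ (Fin n)) :
    ‖x‖ = Real.sqrt (∑ i, x i ^ 2) := by
  rw [EuclideanSpace.norm_eq]
  congr 1
  exact Finset.sum_congr rfl fun i _ => by rw [Real.norm_eq_abs, sq_abs]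

private lemma fkm_stiefel_norm_le {A : Matrix (Fin p) (Fin q) ℝ} (hA : A ∈ Stiefel p q)
    (x : EuclideanSpace ℝ (Fin p)) : ‖mulVecT A x‖ ≤ ‖x‖ := by
  classical
  set x' : Fin p → ℝ := WithLp.equiv 2 (Fin p → ℝ) x with hx'
  set u : Fin q → ℝ := A.transpose.mulVec x' with hu
  have key1 : dotProduct u u = dotProduct (A.mulVec u) x' := by
    rw [hu]
    conv_lhs => rw [Matrix.dotProduct_mulVec, Matrix.vecMul_transpose]
  have key2 : dotProduct (A.mulVec u) (A.mulVec u) = dotProduct u u := by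
    rw [Matrix.dotProduct_mulVec, ← Matrix.mulVec_transpose, Matrix.mulVec_mulVec, hA,
      Matrix.one_mulVec]
  have cs : (dotProduct (A.mulVec u) x') ^ 2 ≤
      (∑ i, (A.mulVec u) i ^ 2) * ∑ i, x' i ^ 2 := by
    simpa [dotProduct, sq] using
      Finset.sum_mul_sq_le_sq_mul_sq Finset.univ (A.mulVec u) x'
  have hdots : ∀ v : Fin p → ℝ, dotProduct v v = ∑ i, v i ^ 2 := by
    intro v; simp [dotProduct, sq]
  have hdotq : ∀ v : Fin q → ℝ, dotProduct v v = ∑ i, v i ^ 2 := by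
    intro v; simp [dotProduct, sq]
  have husq : (∑ j, u j ^ 2) ^ 2 ≤ (∑ j, u j ^ 2) * ∑ i, x' i ^ 2 := by
    calc (∑ j, u j ^ 2) ^ 2 = (dotProduct (A.mulVec u) x') ^ 2 := by
          rw [← key1, hdotq]
      _ ≤ (∑ i, (A.mulVec u) i ^ 2) * ∑ i, x' i ^ 2 := cs
      _ = (∑ j, u j ^ 2) * ∑ i, x' i ^ 2 := by rw [← hdots, key2, hdotq]
  have hu_le : (∑ j, u j ^ 2) ≤ ∑ i, x' i ^ 2 := by
    rcases eq_or_lt_of_le (Finset.sum_nonneg fun j _ => sq_nonneg (u j)) with h0 | h0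
    · rw [← h0]; exact Finset.sum_nonneg fun i _ => sq_nonneg (x' i)
    · have := husq
      rw [sq] at this
      exact le_of_mul_le_mul_left this h0
  rw [fkm_norm_mulVecT_sq, fkm_norm_euclid]
  exact Real.sqrt_le_sqrt hu_le

private lemma fkm_mulVecT_sub (A B : Matrix (Fin p) (Fin q) ℝ) (x : EuclideanSpace ℝ (Fin p)) :
    mulVecT A x - mulVecT B x = mulVecT (A - B) x := by
  simp only [mulVecT, Matrix.transpose_sub, Matrix.sub_mulVec]
  rfl

private lemma fkm_dist_mulVecT_le (A B : Matrix (Fin p) (Fin q) ℝ)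
    (x : EuclideanSpace ℝ (Fin p)) :
    dist (mulVecT A x) (mulVecT B x) ≤ frobDist A B * ‖x‖ := by
  rw [dist_eq_norm, fkm_mulVecT_sub, fkm_norm_mulVecT_sq]
  set x' : Fin p → ℝ := WithLp.equiv 2 (Fin p → ℝ) x with hx'
  have hxnorm : ‖x‖ = Real.sqrt (∑ i, x' i ^ 2) := fkm_norm_euclid x
  rw [hxnorm, frobDist, ← Real.sqrt_mul (Finset.sum_nonneg fun i _ =>
    Finset.sum_nonneg fun j _ => sq_nonneg _)]
  apply Real.sqrt_le_sqrt
  calc ∑ j, ((A - B).transpose.mulVec x') j ^ 2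
      = ∑ j, (∑ i, (A i j - B i j) * x' i) ^ 2 := by
        refine Finset.sum_congr rfl fun j _ => ?_
        congr 1
    _ ≤ ∑ j, (∑ i, (A i j - B i j) ^ 2) * ∑ i, x' i ^ 2 := by
        refine Finset.sum_le_sum fun j _ => ?_
        exact Finset.sum_mul_sq_le_sq_mul_sq Finset.univ _ _
    _ = (∑ i, ∑ j, (A i j - B i j) ^ 2) * ∑ i, x' i ^ 2 := by
        rw [← Finset.sum_mul, Finset.sum_comm]

private lemma fkm_frobDist_nonneg {m n : ℕ} (A B : Matrix (Fin m) (Fin n) ℝ) :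
    0 ≤ frobDist A B := Real.sqrt_nonneg _

private lemma fkm_frobDist_comm {m n : ℕ} (A B : Matrix (Fin m) (Fin n) ℝ) :
    frobDist A B = frobDist B A := by
  unfold frobDist
  congr 1
  exact Finset.sum_congr rfl fun i _ => Finset.sum_congr rfl fun j _ => by ring

private lemma fkm_continuous_mulVecT (A : Matrix (Fin p) (Fin q) ℝ) :
    Continuous (mulVecT A) := by
  unfold mulVecT
  refine (PiLp.continuous_toLp 2 (fun _ : Fin q => ℝ)).comp ?_
  refine continuous_pi fun j => ?_
  unfold Matrix.mulVec dotProduct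
  exact continuous_finset_sum _ fun i _ =>
    continuous_const.mul ((continuous_apply i).comp (PiLp.continuous_ofLp 2 _))

private lemma fkm_lossFn_eq {ψ : ℝ → ℝ} (hψm : MonotoneOn ψ (Set.Ici 0))
    {F : Finset (EuclideanSpace ℝ (Fin q))} (hF : F.Nonempty)
    (A : Matrix (Fin p) (Fin q) ℝ) (x : EuclideanSpace ℝ (Fin p)) :
    lossFn ψ F A x = ψ (infDist (mulVecT A x) (F : Set (EuclideanSpace ℝ (Fin q)))) := by
  classical
  rw [lossFn, dif_pos hF]
  set y := mulVecT A x
  obtain ⟨f₀, hf₀, hd₀⟩ := (F.finite_toSet.isCompact).exists_infDist_eq_dist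
    (by exact_mod_cast hF.to_set) y
  obtain ⟨f₁, hf₁, hd₁⟩ := F.exists_mem_eq_inf' hF (fun f => ψ ‖y - f‖)
  apply le_antisymm
  · rw [hd₀, dist_eq_norm]
    exact F.inf'_le _ hf₀
  · rw [hd₁]
    apply hψm (Set.mem_Ici.2 infDist_nonneg) (Set.mem_Ici.2 (norm_nonneg _))
    rw [← dist_eq_norm]
    exact infDist_le_dist_of_mem hf₁

private lemma fkm_ball_le_paramDist_haus (θ θ' : Param p q) :
    hausdorffDist (θ.1 : Set (EuclideanSpace ℝ (Fin q)))
      (θ'.1 : Set (EuclideanSpace ℝ (Fin q))) ≤ paramDist θ θ' := by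
  rw [paramDist]
  have h := Real.sqrt_le_sqrt (le_add_of_nonneg_left (sq_nonneg (frobDist θ.2 θ'.2)) :
    hausdorffDist (θ.1 : Set (EuclideanSpace ℝ (Fin q))) (θ'.1 : Set _) ^ 2 ≤ _)
  rwa [Real.sqrt_sq hausdorffDist_nonneg] at h

private lemma fkm_frob_le_paramDist (θ θ' : Param p q) :
    frobDist θ.2 θ'.2 ≤ paramDist θ θ' := by
  rw [paramDist]
  have h := Real.sqrt_le_sqrt (le_add_of_nonneg_right (sq_nonneg (hausdorffDist
    (θ.1 : Set (EuclideanSpace ℝ (Fin q))) (θ'.1 : Set _))) :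
      frobDist θ.2 θ'.2 ^ 2 ≤ _)
  rwa [Real.sqrt_sq (fkm_frobDist_nonneg _ _)] at h

end AuxFKM

/-- **Continuity of the population FKM loss on Θ_k*(M) in the product metric.** -/
theorem continuity_population_FKM_loss {p q k : ℕ} (hp : 0 < p) (hq : 0 < q)
    (hk : 0 < k) (hqp : q < p)
    (ψ : ℝ → ℝ) (lam : ℝ) (hlam : 0 < lam)
    (hψ0 : ψ 0 = 0) (hψnn : ∀ r : ℝ, 0 ≤ r → 0 ≤ ψ r)
    (hψc : ContinuousOn ψ (Set.Ici 0)) (hψm : MonotoneOn ψ (Set.Ici 0))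
    (hψlam : ∀ r : ℝ, 0 < r → ψ (2 * r) ≤ lam * ψ r)
    (M : ℝ) (hM : 0 < M)
    (P : Measure (EuclideanSpace ℝ (Fin p))) [IsProbabilityMeasure P]
    (hint : Integrable (fun x => ψ ‖x‖) P) :
    ∀ θ ∈ XiStar p q k M, ∀ ε : ℝ, 0 < ε → ∃ δ : ℝ, 0 < δ ∧
      ∀ θ' ∈ XiStar p q k M, paramDist θ θ' < δ →
        |Psi ψ θ'.1 θ'.2 P - Psi ψ θ.1 θ.2 P| < ε := by
  classical
  intro θ hθ ε hε
  by_contra hcon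
  push_neg at hcon
  obtain ⟨⟨hFne, hcard, hAst⟩, hFball⟩ := hθ
  have hchoice : ∀ n : ℕ, ∃ θ' : Param p q, θ' ∈ XiStar p q k M ∧
      paramDist θ θ' < 1 / ((n : ℝ) + 1) ∧
      ε ≤ |Psi ψ θ'.1 θ'.2 P - Psi ψ θ.1 θ.2 P| := by
    intro n
    obtain ⟨θ', h1, h2, h3⟩ := hcon (1 / ((n : ℝ) + 1)) (by positivity)
    exact ⟨θ', h1, h2, h3⟩
  choose Θn hmem hdist hfar using hchoice
  have hFne' : ∀ n, (Θn n).1.Nonempty := fun n => (hmem n).1.1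
  have hAst' : ∀ n, (Θn n).2 ∈ Stiefel p q := fun n => (hmem n).1.2.2
  have hFball' : ∀ n, ((Θn n).1 : Set (EuclideanSpace ℝ (Fin q))) ⊆ closedBall 0 M :=
    fun n => (hmem n).2
  -- the dominating function
  set g : EuclideanSpace ℝ (Fin p) → ℝ := fun x => lam * ψ ‖x‖ + ψ (2 * M) with hg
  have hg_int : Integrable g P := (hint.const_mul lam).add (integrable_const _)
  -- bound on ψ (‖x‖ + M)
  have hpsi_bound : ∀ x : EuclideanSpace ℝ (Fin p), ψ (‖x‖ + M) ≤ g x := by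
    intro x
    by_cases h : ‖x‖ ≤ M
    · have h1 : ψ (‖x‖ + M) ≤ ψ (2 * M) := by
        apply hψm (Set.mem_Ici.2 (by positivity)) (Set.mem_Ici.2 (by positivity))
        linarith
      have h2 : 0 ≤ lam * ψ ‖x‖ := mul_nonneg hlam.le (hψnn _ (norm_nonneg x))
      simp only [hg]; linarith
    · push_neg at h
      have hx0 : 0 < ‖x‖ := hM.trans h
      have h1 : ψ (‖x‖ + M) ≤ ψ (2 * ‖x‖) := by
        apply hψm (Set.mem_Ici.2 (by positivity)) (Set.mem_Ici.2 (by positivity))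
        linarith
      have h2 : ψ (2 * ‖x‖) ≤ lam * ψ ‖x‖ := hψlam _ hx0
      have h3 : 0 ≤ ψ (2 * M) := hψnn _ (by positivity)
      simp only [hg]; linarith
  -- infDist bound
  have hinf_le : ∀ (F : Finset (EuclideanSpace ℝ (Fin q))), F.Nonempty →
      ((F : Set (EuclideanSpace ℝ (Fin q))) ⊆ closedBall 0 M) →
      ∀ (A : Matrix (Fin p) (Fin q) ℝ), A ∈ Stiefel p q →
      ∀ x : EuclideanSpace ℝ (Fin p),
        infDist (mulVecT A x) (F : Set (EuclideanSpace ℝ (Fin q))) ≤ ‖x‖ + M := by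
    intro F hF hFb A hA x
    obtain ⟨f, hf⟩ := hF
    have hfmem : (f : EuclideanSpace ℝ (Fin q)) ∈ (F : Set (EuclideanSpace ℝ (Fin q))) := by
      exact_mod_cast hf
    have h1 : infDist (mulVecT A x) (F : Set (EuclideanSpace ℝ (Fin q))) ≤
        dist (mulVecT A x) f := infDist_le_dist_of_mem hfmem
    have h2 : dist (mulVecT A x) f ≤ ‖mulVecT A x‖ + ‖f‖ := by
      rw [dist_eq_norm]; exact norm_sub_le _ _
    have h3 : ‖f‖ ≤ M := mem_closedBall_zero_iff.1 (hFb hfmem)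
    have h4 : ‖mulVecT A x‖ ≤ ‖x‖ := fkm_stiefel_norm_le hA x
    linarith
  -- continuity in x of the loss, for each parameter
  have hcont : ∀ (F : Finset (EuclideanSpace ℝ (Fin q))), F.Nonempty →
      ∀ (A : Matrix (Fin p) (Fin q) ℝ), Continuous (fun x => lossFn ψ F A x) := by
    intro F hF A
    have : (fun x => lossFn ψ F A x) =
        (fun x => ψ (infDist (mulVecT A x) (F : Set (EuclideanSpace ℝ (Fin q))))) :=
      funext fun x => fkm_lossFn_eq hψm hF A x
    rw [this]
    exact hψc.comp_continuous
      ((continuous_infDist_pt _).comp (fkm_continuous_mulVecT A))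
      (fun x => Set.mem_Ici.2 infDist_nonneg)
  -- Hausdorff edist finiteness
  have hedist : ∀ n, EMetric.hausdorffEdist
      ((Θn n).1 : Set (EuclideanSpace ℝ (Fin q))) (θ.1 : Set (EuclideanSpace ℝ (Fin q))) ≠ ⊤ :=
    fun n => hausdorffEdist_ne_top_of_nonempty_of_bounded
      (by exact_mod_cast (hFne' n).to_set) (by exact_mod_cast hFne.to_set)
      ((Θn n).1.finite_toSet.isBounded) (θ.1.finite_toSet.isBounded)
  -- main convergence of integrals
  have htend : Tendsto (fun n => Psi ψ (Θn n).1 (Θn n).2 P) atTop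
      (nhds (Psi ψ θ.1 θ.2 P)) := by
    simp only [Psi]
    apply tendsto_integral_of_dominated_convergence g
    · exact fun n => ((hcont _ (hFne' n) _)).aestronglyMeasurable
    · exact hg_int
    · intro n
      refine Filter.Eventually.of_forall fun x => ?_
      rw [fkm_lossFn_eq hψm (hFne' n)]
      have t_nonneg : (0:ℝ) ≤ infDist (mulVecT (Θn n).2 x)
          ((Θn n).1 : Set (EuclideanSpace ℝ (Fin q))) := infDist_nonneg
      rw [Real.norm_eq_abs, abs_of_nonneg (hψnn _ t_nonneg)]
      calc ψ (infDist (mulVecT (Θn n).2 x) ((Θn n).1 : Set (EuclideanSpace ℝ (Fin q))))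
          ≤ ψ (‖x‖ + M) := hψm (Set.mem_Ici.2 t_nonneg)
            (Set.mem_Ici.2 (by positivity))
            (hinf_le _ (hFne' n) (hFball' n) _ (hAst' n) x)
        _ ≤ g x := hpsi_bound x
    · refine Filter.Eventually.of_forall fun x => ?_
      have hrw : ∀ n, lossFn ψ (Θn n).1 (Θn n).2 x =
          ψ (infDist (mulVecT (Θn n).2 x) ((Θn n).1 : Set (EuclideanSpace ℝ (Fin q)))) :=
        fun n => fkm_lossFn_eq hψm (hFne' n) _ x
      rw [fkm_lossFn_eq hψm hFne]
      simp only [hrw]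
      set y : EuclideanSpace ℝ (Fin q) := mulVecT θ.2 x with hy
      set t : ℝ := infDist y (θ.1 : Set (EuclideanSpace ℝ (Fin q))) with ht
      set tn : ℕ → ℝ := fun n =>
        infDist (mulVecT (Θn n).2 x) ((Θn n).1 : Set (EuclideanSpace ℝ (Fin q))) with htn
      -- |tn n - t| ≤ dist (y n) y + hausdorffDist
      have habs : ∀ n, |tn n - t| ≤ dist (mulVecT (Θn n).2 x) y +
          hausdorffDist ((Θn n).1 : Set (EuclideanSpace ℝ (Fin q)))
            (θ.1 : Set (EuclideanSpace ℝ (Fin q))) := by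
        intro n
        set yn := mulVecT (Θn n).2 x with hyn
        set dH := hausdorffDist ((Θn n).1 : Set (EuclideanSpace ℝ (Fin q)))
          (θ.1 : Set (EuclideanSpace ℝ (Fin q))) with hdH
        have h1 : tn n ≤ infDist yn (θ.1 : Set (EuclideanSpace ℝ (Fin q))) + dH := by
          have := infDist_le_infDist_add_hausdorffDist
            (x := yn) (s := (θ.1 : Set (EuclideanSpace ℝ (Fin q))))
            (t := ((Θn n).1 : Set (EuclideanSpace ℝ (Fin q))))
            (by rw [EMetric.hausdorffEdist_comm]; exact hedist n)
          rw [hausdorffDist_comm] at this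
          exact this
        have h2 : infDist yn (θ.1 : Set (EuclideanSpace ℝ (Fin q))) ≤ t + dist yn y :=
          infDist_le_infDist_add_dist
        have h3 : t ≤ infDist y ((Θn n).1 : Set (EuclideanSpace ℝ (Fin q))) + dH :=
          infDist_le_infDist_add_hausdorffDist (hedist n)
        have h4 : infDist y ((Θn n).1 : Set (EuclideanSpace ℝ (Fin q))) ≤ tn n + dist y yn :=
          infDist_le_infDist_add_dist
        rw [abs_sub_le_iff]
        constructor
        · have := h1.trans (by linarith : infDist yn (θ.1 : Set (EuclideanSpace ℝ (Fin q))) + dH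
            ≤ t + dist yn y + dH)
          linarith
        · have h5 : dist y yn = dist yn y := dist_comm _ _
          linarith
      -- bound the RHS by a sequence tending to 0
      have hb : ∀ n, |tn n - t| ≤ (1 / ((n : ℝ) + 1)) * ‖x‖ + 1 / ((n : ℝ) + 1) := by
        intro n
        refine (habs n).trans (add_le_add ?_ ?_)
        · calc dist (mulVecT (Θn n).2 x) y ≤ frobDist (Θn n).2 θ.2 * ‖x‖ :=
              fkm_dist_mulVecT_le _ _ x
            _ ≤ (1 / ((n : ℝ) + 1)) * ‖x‖ := by
              apply mul_le_mul_of_nonneg_right _ (norm_nonneg x)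
              rw [fkm_frobDist_comm]
              exact (fkm_frob_le_paramDist θ (Θn n)).trans (hdist n).le
        · rw [hausdorffDist_comm]
          exact (fkm_ball_le_paramDist_haus θ (Θn n)).trans (hdist n).le
      have hb0 : Tendsto (fun n : ℕ => (1 / ((n : ℝ) + 1)) * ‖x‖ + 1 / ((n : ℝ) + 1))
          atTop (nhds 0) := by
        have h1 := tendsto_one_div_add_atTop_nhds_zero_nat (𝕜 := ℝ)
        have := (h1.mul_const ‖x‖).add h1
        simpa using this
      have htt : Tendsto tn atTop (nhds t) := by
        rw [tendsto_iff_dist_tendsto_zero]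
        apply squeeze_zero (fun n => dist_nonneg) (fun n => ?_) hb0
        rw [Real.dist_eq]
        exact hb n
      -- compose with ψ continuous on [0, ∞)
      have hmemIci : ∀ n, tn n ∈ Set.Ici (0:ℝ) := fun n => Set.mem_Ici.2 infDist_nonneg
      have htIci : t ∈ Set.Ici (0:ℝ) := Set.mem_Ici.2 infDist_nonneg
      have hwithin : Tendsto tn atTop (nhdsWithin t (Set.Ici 0)) :=
        tendsto_nhdsWithin_iff.2 ⟨htt, Filter.Eventually.of_forall hmemIci⟩
      exact (hψc t htIci).tendsto.comp hwithin
  -- derive the contradiction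
  rw [Metric.tendsto_atTop] at htend
  obtain ⟨N, hN⟩ := htend ε hε
  have := hN N le_rfl
  rw [Real.dist_eq] at this
  exact absurd this (not_lt.2 (hfar N))


end
end

section
/- Decomposition of the reduced k-means objective: Let X be a real n×p matrix, U a real n×k matrix, F a real k×q matrix, and A ∈ O(p×q). Then ‖X − UFAᵀ‖_F² = ‖X − XAAᵀ‖_F² + ‖XA − UF‖_F², where ‖·‖_F denotes the Frobenius norm; that is, the RKM objective equals the PCA residual term plus the FKM objective. -/
noncomputable section

/-- Squared Frobenius norm of a matrix. -/
def frobSq {m n : ℕ} (A : Matrix (Fin m) (Fin n) ℝ) : ℝ :=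
  ∑ i, ∑ j, (A i j) ^ 2

lemma frobSq_eq_trace {m n : ℕ} (A : Matrix (Fin m) (Fin n) ℝ) :
    frobSq A = Matrix.trace (A.transpose * A) := by
  simp [frobSq, Matrix.trace, Matrix.mul_apply, Matrix.diag, sq]
  rw [Finset.sum_comm]

/-- **Decomposition of the reduced k-means objective**:
`‖X − UFAᵀ‖_F² = ‖X − XAAᵀ‖_F² + ‖XA − UF‖_F²` for column-wise orthonormal `A`. -/
theorem RKM_objective_decomposition {n p q k : ℕ} (hn : 0 < n) (hp : 0 < p)
    (hq : 0 < q) (hk : 0 < k) (hqp : q < p)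
    (X : Matrix (Fin n) (Fin p) ℝ) (U : Matrix (Fin n) (Fin k) ℝ)
    (F : Matrix (Fin k) (Fin q) ℝ) (A : Matrix (Fin p) (Fin q) ℝ)
    (hA : A.transpose * A = 1) :
    frobSq (X - U * F * A.transpose)
      = frobSq (X - X * A * A.transpose) + frobSq (X * A - U * F) := by
  set B := X - X * A * A.transpose with hB
  set C := X * A - U * F with hC
  have hBA : B * A = 0 := by
    rw [hB, Matrix.sub_mul, Matrix.mul_assoc, hA, Matrix.mul_one, sub_self]
  have hsplit : X - U * F * A.transpose = B + C * A.transpose := by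
    rw [hB, hC, Matrix.sub_mul]
    noncomm_ring
  rw [hsplit, frobSq_eq_trace, frobSq_eq_trace, frobSq_eq_trace]
  rw [Matrix.transpose_add, Matrix.add_mul, Matrix.mul_add, Matrix.mul_add]
  rw [Matrix.trace_add, Matrix.trace_add, Matrix.trace_add]
  have h1 : Matrix.trace (B.transpose * (C * A.transpose)) = 0 := by
    rw [Matrix.trace_mul_comm, Matrix.mul_assoc, ← Matrix.transpose_mul, hBA]
    simp
  have h2 : Matrix.trace ((C * A.transpose).transpose * B) = 0 := by
    rw [Matrix.transpose_mul, Matrix.transpose_transpose, Matrix.mul_assoc,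
      Matrix.trace_mul_comm, Matrix.mul_assoc, hBA]
    simp
  have h3 : Matrix.trace ((C * A.transpose).transpose * (C * A.transpose))
      = Matrix.trace (C.transpose * C) := by
    rw [Matrix.transpose_mul, Matrix.transpose_transpose, Matrix.trace_mul_comm,
      Matrix.mul_assoc, ← Matrix.mul_assoc A.transpose, hA, Matrix.one_mul,
      Matrix.trace_mul_comm]
  rw [h1, h2, h3]
  ring

end
end

section
/- Optimal center sets have k distinct elements: Suppose that ∫ ψ(‖x‖) P(dx) < ∞ and that m_j(P) > m_k(P) for every j = 1, …, k−1. Then every (F, A) ∈ Θ′ satisfies #F = k, i.e., any population-optimal set of cluster centers consists of exactly k distinct points. -/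
open MeasureTheory Metric Filter ProbabilityTheory
open scoped ENNReal Classical

noncomputable section

/-- **Optimal center sets have exactly k distinct elements.** -/
theorem optimal_centers_card_eq {p q k : ℕ} (hp : 0 < p) (hq : 0 < q)
    (hk : 0 < k) (hqp : q < p)
    (ψ : ℝ → ℝ) (lam : ℝ) (hlam : 0 < lam)
    (hψ0 : ψ 0 = 0) (hψnn : ∀ r : ℝ, 0 ≤ r → 0 ≤ ψ r)
    (hψc : ContinuousOn ψ (Set.Ici 0)) (hψm : MonotoneOn ψ (Set.Ici 0))
    (hψlam : ∀ r : ℝ, 0 < r → ψ (2 * r) ≤ lam * ψ r)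
    (P : Measure (EuclideanSpace ℝ (Fin p))) [IsProbabilityMeasure P]
    (hint : Integrable (fun x => ψ ‖x‖) P)
    (hsep : ∀ j : ℕ, 1 ≤ j → j < k → mval ψ p q k P < mval ψ p q j P) :
    ∀ θ ∈ OptSet ψ p q k P, θ.1.card = k := by
  intro θ hθ
  obtain ⟨⟨hne, hcard, hSt⟩, hopt⟩ := hθ
  by_contra h
  have hlt : θ.1.card < k := lt_of_le_of_ne hcard h
  have h1 : 1 ≤ θ.1.card := Finset.card_pos.mpr hne
  -- loss is nonneg pointwise
  have hloss : ∀ (F : Finset (EuclideanSpace ℝ (Fin q))) (A) (x),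
      0 ≤ lossFn (p := p) ψ F A x := by
    intro F A x
    unfold lossFn
    split
    · next hF =>
      apply Finset.le_inf'
      intro f _
      exact hψnn _ (norm_nonneg _)
    · exact le_refl 0
  have hPsinn : ∀ θ' : Param p q, 0 ≤ Psi ψ θ'.1 θ'.2 P := by
    intro θ'
    exact integral_nonneg fun x => hloss _ _ _
  have hbdd : (0 : ℝ) ∈ lowerBounds
      ((fun θ' : Param p q => Psi ψ θ'.1 θ'.2 P) '' Xi p q θ.1.card) := by
    rintro y ⟨θ', _, rfl⟩
    exact hPsinn θ'
  have hmem : θ ∈ Xi p q θ.1.card := ⟨hne, le_refl _, hSt⟩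
  have hle : mval ψ p q θ.1.card P ≤ Psi ψ θ.1 θ.2 P :=
    csInf_le ⟨0, hbdd⟩ ⟨θ, hmem, rfl⟩
  have := hsep θ.1.card h1 hlt
  rw [hopt] at hle
  exact absurd (lt_of_le_of_lt hle this) (lt_irrefl _)

end
end
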